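/- arXiv:0912.4489 — 3 statements merged into one kernel-verified Lean document; each statement's English description precedes it below -/
import Mathlib

section
/- Theorem (SMB from the bias–variance trade-off). Assume (A4), (A5), and (A8): there exists s_j > 0 such that 𝚺_{k,j}⁻¹ ⪯ s_j 𝚺_{k,j,diag}⁻¹ for all k ≤ K, where 𝚺_{k,j,diag} is the diagonal matrix consisting of the diagonal entries of 𝚺_{k,j}. Assume moreover that the weights satisfy w_{l,i} w_{m,i} = w_{l,i} for all l ≤ m and all i (nested rectangular-type kernels). Fix j and θ, define b̄_k = max_{1 ≤ l ≤ k} |e_jᵀ(θ̄_l − θ)| and σ_k² = e_jᵀ B_k⁻¹ Ψ W_k Σ0 W_k Ψᵀ B_k⁻¹ e_j (the variance of e_jᵀ θ̃_k under Y ~ N(f, Σ0)), and let k⋆(j) = max{k ≤ K : b̄_k ≤ C_j σ_k} for a constant C_j > 0. Then the small modeling bias bound Δ_j(k⋆(j)) ≤ s_j C_j² (1+δ) (1 − u0⁻¹)⁻¹ holds. -/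
open MeasureTheory ProbabilityTheory Matrix Real

noncomputable section

namespace SpatialAdapt

/-- The law `N(m, diag(s i ^ 2))` on `ℝ^n`: product of independent one-dimensional Gaussians. -/
def gaussianVec (n : ℕ) (m s : Fin n → ℝ) : Measure (Fin n → ℝ) :=
  Measure.pi fun i => gaussianReal (m i) (Real.toNNReal (s i ^ 2))

/-- Löwner partial order on symmetric matrices: `A ⪯ B` iff `B - A` is positive semidefinite. -/
def LoewnerLE {ι : Type*} [Fintype ι] (A B : Matrix ι ι ℝ) : Prop :=
  (B - A).PosSemidef

/-- Diagonal covariance matrix `diag(s i ^ 2)`. -/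
def covMat (n : ℕ) (s : Fin n → ℝ) : Matrix (Fin n) (Fin n) ℝ :=
  Matrix.diagonal fun i => s i ^ 2

/-- `W = Σ^{-1/2} 𝒲 Σ^{-1/2} = diag(w i / σ i ^ 2)`. -/
def Wmat (n : ℕ) (σv : Fin n → ℝ) (w : Fin n → ℝ) : Matrix (Fin n) (Fin n) ℝ :=
  Matrix.diagonal fun i => w i / σv i ^ 2

/-- `B = Ψ W Ψᵀ`. -/
def Bmat (n p : ℕ) (σv : Fin n → ℝ) (Ψ : Matrix (Fin p) (Fin n) ℝ) (w : Fin n → ℝ) :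
    Matrix (Fin p) (Fin p) ℝ :=
  Ψ * Wmat n σv w * Ψᵀ

/-- `D = B⁻¹ Ψ W`. -/
def Dmat (n p : ℕ) (σv : Fin n → ℝ) (Ψ : Matrix (Fin p) (Fin n) ℝ) (w : Fin n → ℝ) :
    Matrix (Fin p) (Fin n) ℝ :=
  (Bmat n p σv Ψ w)⁻¹ * Ψ * Wmat n σv w

/-- The quasi-MLE `θ̃ = B⁻¹ Ψ W y`. -/
def thetaTilde (n p : ℕ) (σv : Fin n → ℝ) (Ψ : Matrix (Fin p) (Fin n) ℝ) (w : Fin n → ℝ)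
    (y : Fin n → ℝ) : Fin p → ℝ :=
  (Dmat n p σv Ψ w).mulVec y

/-- Quadratic form `v ⬝ B v`. -/
def quadForm {p : ℕ} (B : Matrix (Fin p) (Fin p) ℝ) (v : Fin p → ℝ) : ℝ :=
  v ⬝ᵥ B.mulVec v

/-- The test statistic `T_{lm} = (θ̃_l - θ̃_m)ᵀ B_l (θ̃_l - θ̃_m)`. -/
def Tstat (n p : ℕ) (σv : Fin n → ℝ) (Ψ : Matrix (Fin p) (Fin n) ℝ) (w : ℕ → Fin n → ℝ)
    (l m : ℕ) (y : Fin n → ℝ) : ℝ :=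
  quadForm (Bmat n p σv Ψ (w l))
    (thetaTilde n p σv Ψ (w l) y - thetaTilde n p σv Ψ (w m) y)

/-- The adaptive index `k̂ = max {k ≤ K : T_{lm} ≤ z_l for all 1 ≤ l < m ≤ k}`. -/
def khat (n p K : ℕ) (σv : Fin n → ℝ) (Ψ : Matrix (Fin p) (Fin n) ℝ) (w : ℕ → Fin n → ℝ)
    (z : ℕ → ℝ) (y : Fin n → ℝ) : ℕ :=
  sSup {k | k ≤ K ∧ ∀ l m, 1 ≤ l → l < m → m ≤ k → Tstat n p σv Ψ w l m y ≤ z l}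

/-- The adaptive estimator `θ̂ = θ̃_{k̂}`. -/
def thetaHat (n p K : ℕ) (σv : Fin n → ℝ) (Ψ : Matrix (Fin p) (Fin n) ℝ) (w : ℕ → Fin n → ℝ)
    (z : ℕ → ℝ) (y : Fin n → ℝ) : Fin p → ℝ :=
  thetaTilde n p σv Ψ (w (khat n p K σv Ψ w z y)) y

/-- The last accepted estimator after `k` steps: `θ̂_k = θ̃_{min(k, k̂)}`. -/
def thetaHatStep (n p K : ℕ) (σv : Fin n → ℝ) (Ψ : Matrix (Fin p) (Fin n) ℝ)
    (w : ℕ → Fin n → ℝ) (z : ℕ → ℝ) (k : ℕ) (y : Fin n → ℝ) : Fin p → ℝ :=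
  thetaTilde n p σv Ψ (w (min k (khat n p K σv Ψ w z y))) y

/-- `C(p, r) = E|χ²_p|^r = 2^r Γ(r + p/2) / Γ(p/2)`. -/
def Cpr (p : ℕ) (r : ℝ) : ℝ :=
  2 ^ r * Real.Gamma (r + p / 2) / Real.Gamma (p / 2)

/-- `P(χ²_p ≥ t)`, the tail of the chi-squared distribution with `p` degrees of freedom. -/
def chiSqTail (p : ℕ) (t : ℝ) : ℝ :=
  ((Measure.pi fun _ : Fin p => gaussianReal 0 1) {x | t ≤ ∑ i, x i ^ 2}).toReal

/-- The `pk × pk` joint covariance `𝔻_k (J_k ⊗ Σm) 𝔻_kᵀ`, whose `(l, m)` block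
is `D_l Σm D_mᵀ` (blocks are indexed by `1, …, k`, i.e. by `Fin k` shifted by one). -/
def jointCov (n p : ℕ) (σv σm : Fin n → ℝ) (Ψ : Matrix (Fin p) (Fin n) ℝ)
    (w : ℕ → Fin n → ℝ) (k : ℕ) : Matrix (Fin k × Fin p) (Fin k × Fin p) ℝ :=
  Matrix.of fun a b =>
    (Dmat n p σv Ψ (w (a.1 + 1)) * covMat n σm * (Dmat n p σv Ψ (w (b.1 + 1)))ᵀ) a.2 b.2

/-- The stacked bias vector `b(k) = (θ̄_1 - θ, …, θ̄_k - θ)`. -/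
def biasVec (n p : ℕ) (σv : Fin n → ℝ) (Ψ : Matrix (Fin p) (Fin n) ℝ) (w : ℕ → Fin n → ℝ)
    (k : ℕ) (f : Fin n → ℝ) (θ : Fin p → ℝ) : Fin k × Fin p → ℝ :=
  fun a => (thetaTilde n p σv Ψ (w (a.1 + 1)) f - θ) a.2

/-- The modeling bias `Δ(k) = b(k)ᵀ 𝚺_k⁻¹ b(k)`. -/
def DeltaK (n p : ℕ) (σv : Fin n → ℝ) (Ψ : Matrix (Fin p) (Fin n) ℝ) (w : ℕ → Fin n → ℝ)
    (k : ℕ) (f : Fin n → ℝ) (θ : Fin p → ℝ) : ℝ :=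
  biasVec n p σv Ψ w k f θ ⬝ᵥ
    (jointCov n p σv σv Ψ w k)⁻¹.mulVec (biasVec n p σv Ψ w k f θ)

/-- The componentwise `k × k` covariance `𝚺_{k,j}` with entries `(D_l Σm D_mᵀ)_{jj}`. -/
def jointCovComp (n p : ℕ) (σv σm : Fin n → ℝ) (Ψ : Matrix (Fin p) (Fin n) ℝ)
    (w : ℕ → Fin n → ℝ) (k : ℕ) (j : Fin p) : Matrix (Fin k) (Fin k) ℝ :=
  Matrix.of fun a b =>
    (Dmat n p σv Ψ (w (a.1 + 1)) * covMat n σm * (Dmat n p σv Ψ (w (b.1 + 1)))ᵀ) j j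

/-- The componentwise bias vector `b_j(k)`. -/
def biasVecComp (n p : ℕ) (σv : Fin n → ℝ) (Ψ : Matrix (Fin p) (Fin n) ℝ)
    (w : ℕ → Fin n → ℝ) (k : ℕ) (f : Fin n → ℝ) (θ : Fin p → ℝ) (j : Fin p) : Fin k → ℝ :=
  fun a => (thetaTilde n p σv Ψ (w (a.1 + 1)) f - θ) j

/-- The componentwise modeling bias `Δ_j(k) = b_j(k)ᵀ 𝚺_{k,j}⁻¹ b_j(k)`. -/
def DeltaComp (n p : ℕ) (σv : Fin n → ℝ) (Ψ : Matrix (Fin p) (Fin n) ℝ)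
    (w : ℕ → Fin n → ℝ) (k : ℕ) (f : Fin n → ℝ) (θ : Fin p → ℝ) (j : Fin p) : ℝ :=
  biasVecComp n p σv Ψ w k f θ j ⬝ᵥ
    (jointCovComp n p σv σv Ψ w k j)⁻¹.mulVec (biasVecComp n p σv Ψ w k f θ j)

open scoped Classical in
/-- `φ(δ)`: equal to `1` for homogeneous errors, `2(1+δ)/(1-δ)² - 1` otherwise. -/
def varphi (n : ℕ) (σ0 σv : Fin n → ℝ) (δ : ℝ) : ℝ :=
  if ∃ c0 c : ℝ, (∀ i, σ0 i = c0) ∧ (∀ i, σv i = c) then 1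
  else 2 * (1 + δ) / (1 - δ) ^ 2 - 1

/-- `σ̄²_max(k) = max_{1 ≤ l ≤ k} σ²_max(l)`. -/
def sbarMax (σmax : ℕ → ℝ) (k : ℕ) : ℝ :=
  sSup (σmax '' Set.Icc 1 k)

/-- Euclidean norm on `ℝ^p`. -/
def enorm {p : ℕ} (v : Fin p → ℝ) : ℝ :=
  Real.sqrt (∑ i, v i ^ 2)

/-!
Under nested rectangular weights the covariance of `θ̃_l` is `B_l⁻¹`, and (A5) makes its `j`-th
diagonal entry `v_l` shrink at least by the factor `u0⁻¹` per step. The trade-off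
`b̄_{k⋆} ≤ C_j σ_{k⋆}` together with (A4) bounds every squared bias `b_l²`, `l ≤ k⋆`, by
`C_j² (1+δ) v_{k⋆}`, i.e. by the smallest variance. By (A8), `Δ_j(k⋆) ≤ s_j ∑_l b_l² / v_l`,
and `v_{k⋆} / v_l ≤ u0^{-(k⋆-l)}` turns this sum into a geometric series.
-/

section QuadForm

variable {q : ℕ}

lemma quadForm_le_of_loewnerLE {A B : Matrix (Fin q) (Fin q) ℝ} (h : LoewnerLE A B)
    (x : Fin q → ℝ) : quadForm A x ≤ quadForm B x := by
  have := h.dotProduct_mulVec_nonneg x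
  rwa [star_trivial, sub_mulVec, dotProduct_sub, sub_nonneg] at this

lemma dotProduct_mulVec_comm_of_isHermitian {A : Matrix (Fin q) (Fin q) ℝ} (hA : A.IsHermitian)
    (x y : Fin q → ℝ) : x ⬝ᵥ A *ᵥ y = y ⬝ᵥ A *ᵥ x := by
  rw [dotProduct_mulVec, ← mulVec_transpose, ← conjTranspose_eq_transpose_of_trivial, hA.eq,
    dotProduct_comm]

lemma two_mul_dotProduct_sub_quadForm_le {A : Matrix (Fin q) (Fin q) ℝ} (hA : A.PosDef)
    (x y : Fin q → ℝ) : 2 * (x ⬝ᵥ y) - quadForm A y ≤ quadForm A⁻¹ x := by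
  have hAz : A *ᵥ (A⁻¹ *ᵥ x) = x := by
    rw [mulVec_mulVec, mul_nonsing_inv _ hA.det_pos.ne'.isUnit, one_mulVec]
  have h := hA.posSemidef.dotProduct_mulVec_nonneg (y - A⁻¹ *ᵥ x)
  rw [star_trivial, mulVec_sub, hAz, dotProduct_sub, sub_dotProduct, sub_dotProduct,
    dotProduct_mulVec_comm_of_isHermitian hA.isHermitian (A⁻¹ *ᵥ x) y, hAz] at h
  unfold quadForm
  rw [dotProduct_comm (A⁻¹ *ᵥ x) x, dotProduct_comm y x] at h
  linarith

lemma quadForm_inv_le_of_loewnerLE {A B : Matrix (Fin q) (Fin q) ℝ} (hA : A.PosDef)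
    (hAB : LoewnerLE A B) (x : Fin q → ℝ) : quadForm B⁻¹ x ≤ quadForm A⁻¹ x := by
  -- `xᵀ A⁻¹ x = max_y (2 xᵀ y - yᵀ A y)`, the maximum being attained at `y = A⁻¹ x`.
  have hB : B.PosDef := by simpa using hA.add_posSemidef hAB
  have hBy : B *ᵥ (B⁻¹ *ᵥ x) = x := by
    rw [mulVec_mulVec, mul_nonsing_inv _ hB.det_pos.ne'.isUnit, one_mulVec]
  calc quadForm B⁻¹ x = 2 * (x ⬝ᵥ B⁻¹ *ᵥ x) - quadForm B (B⁻¹ *ᵥ x) := by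
        rw [quadForm, quadForm, hBy, dotProduct_comm _ x]; ring
    _ ≤ 2 * (x ⬝ᵥ B⁻¹ *ᵥ x) - quadForm A (B⁻¹ *ᵥ x) := by
        gcongr; exact quadForm_le_of_loewnerLE hAB _
    _ ≤ quadForm A⁻¹ x := two_mul_dotProduct_sub_quadForm_le hA x _

lemma quadForm_single (M : Matrix (Fin q) (Fin q) ℝ) (j : Fin q) :
    quadForm M (Pi.single j 1) = M j j := by
  simp [quadForm]

lemma inv_apply_self_le_of_smul_loewnerLE {A B : Matrix (Fin q) (Fin q) ℝ} (hA : A.PosDef)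
    {c : ℝ} (hc : 0 < c) (hAB : LoewnerLE (c • A) B) (j : Fin q) :
    B⁻¹ j j ≤ c⁻¹ * A⁻¹ j j := by
  have h := quadForm_inv_le_of_loewnerLE (hA.smul hc) hAB (Pi.single j 1)
  have := invertibleOfNonzero hc.ne'
  rwa [quadForm_single, quadForm_single, inv_smul A c hA.det_pos.ne'.isUnit, invOf_eq_inv,
    Matrix.smul_apply, smul_eq_mul] at h

lemma quadForm_smul_inv_diagonal {d : Fin q → ℝ} (hd : ∀ a, d a ≠ 0) (s : ℝ) (x : Fin q → ℝ) :
    quadForm (s • (diagonal d)⁻¹) x = s * ∑ a, x a ^ 2 / d a := by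
  have hinv : (diagonal d)⁻¹ = diagonal fun a => (d a)⁻¹ :=
    inv_eq_left_inv <| by rw [diagonal_mul_diagonal, ← diagonal_one]; simp [hd]
  rw [quadForm, hinv, smul_mulVec, dotProduct_smul, smul_eq_mul]
  congr 1
  refine Finset.sum_congr rfl fun a _ => ?_
  rw [mulVec_diagonal]
  ring

end QuadForm

section GeometricDecay

lemma le_pow_mul_of_le_mul_pred {v : ℕ → ℝ} {r : ℝ} (hr : 0 ≤ r) {l m : ℕ}
    (h : ∀ k, l < k → k ≤ m → v k ≤ r * v (k - 1)) (hlm : l ≤ m) :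
    v m ≤ r ^ (m - l) * v l := by
  induction m, hlm using Nat.le_induction with
  | base => simp
  | succ m hlm ih =>
    calc v (m + 1) ≤ r * v m := by simpa using h (m + 1) (by omega) le_rfl
      _ ≤ r * (r ^ (m - l) * v l) := by
        gcongr; exact ih fun k hlk hkm => h k hlk (by omega)
      _ = r ^ (m + 1 - l) * v l := by rw [Nat.sub_add_comm hlm, pow_succ]; ring

lemma sum_pow_sub_one_sub_le {r : ℝ} (hr0 : 0 ≤ r) (hr1 : r < 1) (k : ℕ) :
    ∑ a : Fin k, r ^ (k - 1 - a) ≤ (1 - r)⁻¹ := by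
  rw [Fin.sum_univ_eq_sum_range (fun i => r ^ (k - 1 - i)), Finset.sum_range_reflect (r ^ ·) k,
    Finset.range_eq_Ico]
  simpa using geom_sum_Ico_le_of_lt_one (m := 0) (n := k) hr0 hr1

lemma sum_sq_div_le_of_le_mul_pred {b v : ℕ → ℝ} {M r : ℝ} {k : ℕ} (hM : 0 ≤ M) (hr0 : 0 ≤ r)
    (hr1 : r < 1) (hv : ∀ l, 1 ≤ l → l ≤ k → 0 < v l)
    (hdecay : ∀ l, 2 ≤ l → l ≤ k → v l ≤ r * v (l - 1))
    (hb : ∀ l, 1 ≤ l → l ≤ k → b l ^ 2 ≤ M * v k) :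
    ∑ a : Fin k, b (a + 1) ^ 2 / v (a + 1) ≤ M * (1 - r)⁻¹ := by
  have hterm (a : Fin k) : b (a + 1) ^ 2 / v (a + 1) ≤ M * r ^ (k - 1 - a) := by
    have ha : (a : ℕ) + 1 ≤ k := a.isLt
    rw [div_le_iff₀ (hv _ le_add_self ha)]
    calc b (a + 1) ^ 2 ≤ M * v k := hb _ le_add_self ha
      _ ≤ M * (r ^ (k - (a + 1)) * v (a + 1)) := by
        gcongr; exact le_pow_mul_of_le_mul_pred hr0 (fun l hal hlk => hdecay l (by omega) hlk) ha
      _ = M * r ^ (k - 1 - a) * v (a + 1) := by rw [Nat.sub_add_eq, Nat.sub_right_comm, mul_assoc]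
  calc ∑ a : Fin k, b (a + 1) ^ 2 / v (a + 1) ≤ ∑ a : Fin k, M * r ^ (k - 1 - a) :=
        Finset.sum_le_sum fun a _ => hterm a
    _ = M * ∑ a : Fin k, r ^ (k - 1 - a) := (Finset.mul_sum ..).symm
    _ ≤ M * (1 - r)⁻¹ := by gcongr; exact sum_pow_sub_one_sub_le hr0 hr1 k

lemma sq_le_of_sSup_abs_le_mul_sqrt {g : ℕ → ℝ} {a b l : ℕ} {C V : ℝ} (hV : 0 ≤ V)
    (h : sSup ((fun l => |g l|) '' Set.Icc a b) ≤ C * √V) (hl : l ∈ Set.Icc a b) :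
    g l ^ 2 ≤ C ^ 2 * V := by
  have habs : |g l| ≤ C * √V :=
    (le_csSup ((Set.finite_Icc a b).image _).bddAbove ⟨l, hl, rfl⟩).trans h
  simpa [sq_abs, mul_pow, Real.sq_sqrt hV] using pow_le_pow_left₀ (abs_nonneg _) habs 2

end GeometricDecay

section Covariance

variable {n p : ℕ}

lemma mul_diagonal_mul_transpose_apply_self (D : Matrix (Fin p) (Fin n) ℝ) (d : Fin n → ℝ)
    (j : Fin p) : (D * diagonal d * Dᵀ) j j = ∑ i, D j i ^ 2 * d i := by
  rw [mul_apply]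
  refine Finset.sum_congr rfl fun i _ => ?_
  rw [mul_diagonal, transpose_apply]
  ring

lemma covariance_apply_self_nonneg (D : Matrix (Fin p) (Fin n) ℝ) (s : Fin n → ℝ) (j : Fin p) :
    0 ≤ (D * covMat n s * Dᵀ) j j := by
  rw [covMat, mul_diagonal_mul_transpose_apply_self]
  positivity

lemma covariance_apply_self_le (D : Matrix (Fin p) (Fin n) ℝ) {s t : Fin n → ℝ} {c : ℝ}
    (h : ∀ i, s i ^ 2 ≤ c * t i ^ 2) (j : Fin p) :
    (D * covMat n s * Dᵀ) j j ≤ c * (D * covMat n t * Dᵀ) j j := by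
  rw [covMat, covMat, mul_diagonal_mul_transpose_apply_self,
    mul_diagonal_mul_transpose_apply_self, Finset.mul_sum]
  refine Finset.sum_le_sum fun i _ => ?_
  nlinarith [h i, sq_nonneg (D j i)]

lemma Wmat_mul_covMat_mul_Wmat {σv w : Fin n → ℝ} (hσ : ∀ i, σv i ≠ 0)
    (hw : ∀ i, w i * w i = w i) : Wmat n σv w * covMat n σv * Wmat n σv w = Wmat n σv w := by
  simp only [Wmat, covMat, diagonal_mul_diagonal]
  congr 1
  funext i
  field_simp [hσ i]
  rw [sq, hw]

lemma Bmat_transpose (σv : Fin n → ℝ) (Ψ : Matrix (Fin p) (Fin n) ℝ) (w : Fin n → ℝ) :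
    (Bmat n p σv Ψ w)ᵀ = Bmat n p σv Ψ w := by
  simp only [Bmat, Wmat, transpose_mul, transpose_transpose, diagonal_transpose, Matrix.mul_assoc]

lemma Dmat_mul_covMat_mul_transpose {σv w : Fin n → ℝ} (hσ : ∀ i, σv i ≠ 0)
    (hw : ∀ i, w i * w i = w i) {Ψ : Matrix (Fin p) (Fin n) ℝ}
    (hB : IsUnit (Bmat n p σv Ψ w).det) :
    Dmat n p σv Ψ w * covMat n σv * (Dmat n p σv Ψ w)ᵀ = (Bmat n p σv Ψ w)⁻¹ := by
  have hBinv : ((Bmat n p σv Ψ w)⁻¹)ᵀ = (Bmat n p σv Ψ w)⁻¹ := by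
    rw [transpose_nonsing_inv, Bmat_transpose]
  calc Dmat n p σv Ψ w * covMat n σv * (Dmat n p σv Ψ w)ᵀ
      = (Bmat n p σv Ψ w)⁻¹ * (Ψ * (Wmat n σv w * covMat n σv * Wmat n σv w) * Ψᵀ)
          * (Bmat n p σv Ψ w)⁻¹ := by
        simp only [Dmat, transpose_mul, Wmat, diagonal_transpose, hBinv, Matrix.mul_assoc]
    _ = (Bmat n p σv Ψ w)⁻¹ * Bmat n p σv Ψ w * (Bmat n p σv Ψ w)⁻¹ := by
        rw [Wmat_mul_covMat_mul_Wmat hσ hw, Bmat]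
    _ = (Bmat n p σv Ψ w)⁻¹ := by rw [nonsing_inv_mul _ hB, Matrix.one_mul]

lemma DeltaComp_le_of_loewnerLE {σv : Fin n → ℝ} {Ψ : Matrix (Fin p) (Fin n) ℝ}
    {w : ℕ → Fin n → ℝ} {k : ℕ} {j : Fin p} {s : ℝ}
    (h : LoewnerLE (jointCovComp n p σv σv Ψ w k j)⁻¹
      (s • (diagonal fun a : Fin k => jointCovComp n p σv σv Ψ w k j a a)⁻¹))
    (hd : ∀ a, jointCovComp n p σv σv Ψ w k j a a ≠ 0) (f : Fin n → ℝ) (θ : Fin p → ℝ) :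
    DeltaComp n p σv Ψ w k f θ j ≤
      s * ∑ a, biasVecComp n p σv Ψ w k f θ j a ^ 2 / jointCovComp n p σv σv Ψ w k j a a :=
  (quadForm_le_of_loewnerLE h _).trans_eq (quadForm_smul_inv_diagonal hd _ _)

end Covariance

theorem smb_from_bias_variance_tradeoff_general
    (n p K : ℕ)
    (σv σ0 f : Fin n → ℝ) (hσ : ∀ i, 0 < σv i)
    (Ψ : Matrix (Fin p) (Fin n) ℝ)
    (w : ℕ → Fin n → ℝ)
    (hB : ∀ k, 1 ≤ k → k ≤ K → (Bmat n p σv Ψ (w k)).PosDef)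
    (δ : ℝ) (hδ0 : 0 ≤ δ)
    (hA4 : ∀ i, (1 - δ) * σv i ^ 2 ≤ σ0 i ^ 2 ∧ σ0 i ^ 2 ≤ (1 + δ) * σv i ^ 2)
    (u0 u : ℝ) (hu0 : 1 < u0)
    (hA5 : ∀ k, 2 ≤ k → k ≤ K →
      LoewnerLE (u0 • Bmat n p σv Ψ (w (k - 1))) (Bmat n p σv Ψ (w k)) ∧
      LoewnerLE (Bmat n p σv Ψ (w k)) (u • Bmat n p σv Ψ (w (k - 1))))
    (hrect : ∀ l m, 1 ≤ l → l ≤ m → m ≤ K → ∀ i, w l i * w m i = w l i)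
    (j : Fin p) (θ : Fin p → ℝ)
    (sj : ℝ) (hsj : 0 < sj)
    (hA8 : ∀ k, 1 ≤ k → k ≤ K →
      LoewnerLE (jointCovComp n p σv σv Ψ w k j)⁻¹
        (sj • (Matrix.diagonal fun a : Fin k => jointCovComp n p σv σv Ψ w k j a a)⁻¹))
    (Cj : ℝ)
    (ks : ℕ) (hks1 : 1 ≤ ks) (hksK : ks ≤ K)
    (hksA : sSup ((fun l => |(thetaTilde n p σv Ψ (w l) f - θ) j|) '' Set.Icc 1 ks) ≤
      Cj * Real.sqrt
        ((Dmat n p σv Ψ (w ks) * covMat n σ0 * (Dmat n p σv Ψ (w ks))ᵀ) j j)) :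
    DeltaComp n p σv Ψ w ks f θ j ≤ sj * Cj ^ 2 * (1 + δ) * (1 - u0⁻¹)⁻¹ := by
  set v : ℕ → ℝ := fun l => (Bmat n p σv Ψ (w l))⁻¹ j j
  have hcov : ∀ l, 1 ≤ l → l ≤ K →
      Dmat n p σv Ψ (w l) * covMat n σv * (Dmat n p σv Ψ (w l))ᵀ = (Bmat n p σv Ψ (w l))⁻¹ :=
    fun l hl hlK => Dmat_mul_covMat_mul_transpose (fun i => (hσ i).ne')
      (hrect l l hl le_rfl hlK) (hB l hl hlK).det_pos.ne'.isUnit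
  have hv : ∀ l, 1 ≤ l → l ≤ ks → 0 < v l := fun l hl hlks => (hB l hl (by omega)).inv.diag_pos
  have hdiag (a : Fin ks) : jointCovComp n p σv σv Ψ w ks j a a = v (a + 1) :=
    congrFun (congrFun (hcov (a + 1) le_add_self (by omega)) j) j
  have hdecay : ∀ l, 2 ≤ l → l ≤ ks → v l ≤ u0⁻¹ * v (l - 1) := fun l hl hlks =>
    inv_apply_self_le_of_smul_loewnerLE (hB (l - 1) (by omega) (by omega)) (by positivity)
      (hA5 l hl (by omega)).1 j
  have hbias : ∀ l, 1 ≤ l → l ≤ ks →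
      (thetaTilde n p σv Ψ (w l) f - θ) j ^ 2 ≤ Cj ^ 2 * (1 + δ) * v ks := by
    intro l hl hlks
    have hvar := covariance_apply_self_le (Dmat n p σv Ψ (w ks)) (fun i => (hA4 i).2) j
    rw [hcov ks hks1 hksK] at hvar
    calc _ ≤ Cj ^ 2 * _ :=
          sq_le_of_sSup_abs_le_mul_sqrt (covariance_apply_self_nonneg _ _ _) hksA ⟨hl, hlks⟩
      _ ≤ Cj ^ 2 * (1 + δ) * v ks := by rw [mul_assoc]; gcongr
  have hsum := sum_sq_div_le_of_le_mul_pred (b := fun l => (thetaTilde n p σv Ψ (w l) f - θ) j)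
    (by positivity) (by positivity) (inv_lt_one_of_one_lt₀ hu0) hv hdecay hbias
  calc DeltaComp n p σv Ψ w ks f θ j
      ≤ sj * ∑ a : Fin ks, biasVecComp n p σv Ψ w ks f θ j a ^ 2 / v (a + 1) := by
        simpa only [hdiag] using DeltaComp_le_of_loewnerLE (hA8 ks hks1 hksK)
          (fun a => hdiag a ▸ (hv _ le_add_self a.isLt).ne') f θ
    _ ≤ sj * (Cj ^ 2 * (1 + δ) * (1 - u0⁻¹)⁻¹) := mul_le_mul_of_nonneg_left hsum hsj.le
    _ = sj * Cj ^ 2 * (1 + δ) * (1 - u0⁻¹)⁻¹ := by ring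

/-- **SMB from the bias–variance trade-off.** Under (A4), (A5), (A8) and for nested
rectangular-type kernels, the "ideal adaptive bandwidth" index `k⋆(j)` defined through the
bias–variance relation satisfies the small modeling bias bound
`Δ_j(k⋆(j)) ≤ s_j C_j² (1+δ) (1 - u0⁻¹)⁻¹`. -/
theorem smb_from_bias_variance_tradeoff
    (n p K : ℕ) (hpn : p < n) (hK : 1 ≤ K)
    (σv σ0 f : Fin n → ℝ) (hσ : ∀ i, 0 < σv i) (hσ0 : ∀ i, 0 < σ0 i)
    (Ψ : Matrix (Fin p) (Fin n) ℝ) (hA1 : Ψ.rank = p)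
    (w : ℕ → Fin n → ℝ)
    (hw : ∀ k, 1 ≤ k → k ≤ K → ∀ i, w k i ∈ Set.Icc (0 : ℝ) 1)
    (hB : ∀ k, 1 ≤ k → k ≤ K → (Bmat n p σv Ψ (w k)).PosDef)
    (δ : ℝ) (hδ0 : 0 ≤ δ) (hδ1 : δ < 1)
    (hA4 : ∀ i, (1 - δ) * σv i ^ 2 ≤ σ0 i ^ 2 ∧ σ0 i ^ 2 ≤ (1 + δ) * σv i ^ 2)
    (u0 u : ℝ) (hu0 : 1 < u0) (hu0u : u0 ≤ u)
    (hA5 : ∀ k, 2 ≤ k → k ≤ K →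
      LoewnerLE (u0 • Bmat n p σv Ψ (w (k - 1))) (Bmat n p σv Ψ (w k)) ∧
      LoewnerLE (Bmat n p σv Ψ (w k)) (u • Bmat n p σv Ψ (w (k - 1))))
    (hrect : ∀ l m, 1 ≤ l → l ≤ m → m ≤ K → ∀ i, w l i * w m i = w l i)
    (j : Fin p) (θ : Fin p → ℝ)
    (sj : ℝ) (hsj : 0 < sj)
    (hA8 : ∀ k, 1 ≤ k → k ≤ K →
      LoewnerLE (jointCovComp n p σv σv Ψ w k j)⁻¹
        (sj • (Matrix.diagonal fun a : Fin k => jointCovComp n p σv σv Ψ w k j a a)⁻¹))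
    (Cj : ℝ) (hCj : 0 < Cj)
    (ks : ℕ) (hks1 : 1 ≤ ks) (hksK : ks ≤ K)
    (hksA : sSup ((fun l => |(thetaTilde n p σv Ψ (w l) f - θ) j|) '' Set.Icc 1 ks) ≤
      Cj * Real.sqrt
        ((Dmat n p σv Ψ (w ks) * covMat n σ0 * (Dmat n p σv Ψ (w ks))ᵀ) j j))
    (hksMax : ∀ k, 1 ≤ k → k ≤ K →
      sSup ((fun l => |(thetaTilde n p σv Ψ (w l) f - θ) j|) '' Set.Icc 1 k) ≤
        Cj * Real.sqrt
          ((Dmat n p σv Ψ (w k) * covMat n σ0 * (Dmat n p σv Ψ (w k))ᵀ) j j) →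
      k ≤ ks) :
    DeltaComp n p σv Ψ w ks f θ j ≤ sj * Cj ^ 2 * (1 + δ) * (1 - u0⁻¹)⁻¹ :=
  smb_from_bias_variance_tradeoff_general n p K σv σ0 f hσ Ψ w hB δ hδ0 hA4 u0 u hu0 hA5 hrect j θ
    sj hsj hA8 Cj ks hks1 hksK hksA

end SpatialAdapt
end
end

section
/- Lemma (pivotality property). Assume the nestedness condition (A3), and suppose that θ̄_1 = ⋯ = θ̄_κ = θ for some κ ≤ K (in particular this holds when f = Ψᵀθ). Then for any k ≤ κ and any r > 0, the risk associated with the adaptive estimator does not depend on θ: E_θ |(θ̃_k − θ̂_k)ᵀ B_k (θ̃_k − θ̂_k)|^r = E_0 |(θ̃_k − θ̂_k)ᵀ B_k (θ̃_k − θ̂_k)|^r, where E_θ denotes expectation under Y ~ N(Ψᵀθ, Σ0) (respectively N(Ψᵀθ, Σ)) and E_0 denotes expectation under the same covariance with mean zero. -/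
open MeasureTheory ProbabilityTheory Matrix Real

noncomputable section

namespace SpatialAdapt

private lemma min_sSup_le_aux (k : ℕ) (S T : Set ℕ)
    (hS0 : 0 ∈ S) (hSb : BddAbove S) (hTb : BddAbove T)
    (hSd : ∀ a b, a ≤ b → b ∈ S → a ∈ S)
    (h : ∀ j, j ≤ k → j ∈ S → j ∈ T) :
    min k (sSup S) ≤ min k (sSup T) := by
  have hmem : sSup S ∈ S := Nat.sSup_mem ⟨0, hS0⟩ hSb
  have hmS : min k (sSup S) ∈ S := hSd _ _ (min_le_right _ _) hmem
  have hmT : min k (sSup S) ∈ T := h _ (min_le_left _ _) hmS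
  exact le_min (min_le_left _ _) (le_csSup hTb hmT)

private lemma min_sSup_congr (k : ℕ) (S T : Set ℕ)
    (hS0 : 0 ∈ S) (hT0 : 0 ∈ T) (hSb : BddAbove S) (hTb : BddAbove T)
    (hSd : ∀ a b, a ≤ b → b ∈ S → a ∈ S) (hTd : ∀ a b, a ≤ b → b ∈ T → a ∈ T)
    (h : ∀ j, j ≤ k → (j ∈ S ↔ j ∈ T)) :
    min k (sSup S) = min k (sSup T) :=
  le_antisymm (min_sSup_le_aux k S T hS0 hSb hTb hSd fun j hj => (h j hj).1)
    (min_sSup_le_aux k T S hT0 hTb hSb hTd fun j hj => (h j hj).2)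

private lemma thetaTilde_add (n p : ℕ) (σv : Fin n → ℝ) (Ψ : Matrix (Fin p) (Fin n) ℝ)
    (w : Fin n → ℝ) (y f : Fin n → ℝ) :
    thetaTilde n p σv Ψ w (y + f) = thetaTilde n p σv Ψ w y + thetaTilde n p σv Ψ w f := by
  simp [thetaTilde, Matrix.mulVec_add]

/-- **Pivotality property.** Under (A3), if `θ̄_1 = ⋯ = θ̄_κ = θ` (e.g. when the mean is
`Ψᵀθ`), then for any `k ≤ κ` the risk of the adaptive estimator at step `k` under
`Y ~ N(Ψᵀθ, diag(s²))` coincides with the risk under the centered measure `N(0, diag(s²))`,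
for the covariance `diag(s²)` equal to `Σ₀` or `Σ` (here: any diagonal covariance). -/
theorem pivotality_property
    (n p K : ℕ) (hpn : p < n) (hK : 1 ≤ K)
    (σv : Fin n → ℝ) (hσ : ∀ i, 0 < σv i)
    (Ψ : Matrix (Fin p) (Fin n) ℝ) (hA1 : Ψ.rank = p)
    (w : ℕ → Fin n → ℝ)
    (hw : ∀ k, 1 ≤ k → k ≤ K → ∀ i, w k i ∈ Set.Icc (0 : ℝ) 1)
    (hA3 : ∀ k, 2 ≤ k → k ≤ K → ∀ i, w (k - 1) i ≤ w k i)
    (hB : ∀ k, 1 ≤ k → k ≤ K → (Bmat n p σv Ψ (w k)).PosDef)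
    (z : ℕ → ℝ) (r : ℝ) (hr : 0 < r)
    (κ : ℕ) (hκK : κ ≤ K) (θ : Fin p → ℝ)
    (hbar : ∀ l, 1 ≤ l → l ≤ κ → thetaTilde n p σv Ψ (w l) (Ψᵀ.mulVec θ) = θ) :
    ∀ k, 1 ≤ k → k ≤ κ → ∀ s : Fin n → ℝ,
      ∫ y, |quadForm (Bmat n p σv Ψ (w k))
          (thetaTilde n p σv Ψ (w k) y - thetaHatStep n p K σv Ψ w z k y)| ^ r
        ∂ gaussianVec n (Ψᵀ.mulVec θ) s =
      ∫ y, |quadForm (Bmat n p σv Ψ (w k))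
          (thetaTilde n p σv Ψ (w k) y - thetaHatStep n p K σv Ψ w z k y)| ^ r
        ∂ gaussianVec n 0 s := by
  intro k hk1 hkκ s
  set f : Fin n → ℝ := Ψᵀ.mulVec θ with hf
  -- translation invariance of θ̃_l for l ≤ κ
  have htt : ∀ l, 1 ≤ l → l ≤ κ → ∀ y : Fin n → ℝ,
      thetaTilde n p σv Ψ (w l) (y + f) = thetaTilde n p σv Ψ (w l) y + θ := by
    intro l h1 h2 y
    rw [thetaTilde_add, hbar l h1 h2]
  -- translation invariance of the test statistics up to step κ
  have hT : ∀ l m, 1 ≤ l → l < m → m ≤ κ → ∀ y : Fin n → ℝ,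
      Tstat n p σv Ψ w l m (y + f) = Tstat n p σv Ψ w l m y := by
    intro l m h1 hlm hmκ y
    have hlκ : l ≤ κ := (le_of_lt hlm).trans hmκ
    have hm1 : 1 ≤ m := h1.trans hlm.le
    unfold Tstat
    rw [htt l h1 hlκ y, htt m hm1 hmκ y, add_sub_add_right_eq_sub]
  -- the accepted index truncated at k is translation invariant
  have hmin : ∀ y : Fin n → ℝ,
      min k (khat n p K σv Ψ w z (y + f)) = min k (khat n p K σv Ψ w z y) := by
    intro y
    unfold khat
    refine min_sSup_congr k _ _ ?_ ?_ ⟨K, fun x hx => hx.1⟩ ⟨K, fun x hx => hx.1⟩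
      ?_ ?_ ?_
    · exact ⟨Nat.zero_le K, fun l m h1 hlm hm => (by omega : False).elim⟩
    · exact ⟨Nat.zero_le K, fun l m h1 hlm hm => (by omega : False).elim⟩
    · rintro a b hab ⟨hbK, hb⟩
      exact ⟨hab.trans hbK, fun l m h1 hlm hm => hb l m h1 hlm (hm.trans hab)⟩
    · rintro a b hab ⟨hbK, hb⟩
      exact ⟨hab.trans hbK, fun l m h1 hlm hm => hb l m h1 hlm (hm.trans hab)⟩
    · intro j hj
      constructor
      · rintro ⟨hjK, hj2⟩
        refine ⟨hjK, fun l m h1 hlm hm => ?_⟩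
        rw [← hT l m h1 hlm ((hm.trans hj).trans hkκ) y]
        exact hj2 l m h1 hlm hm
      · rintro ⟨hjK, hj2⟩
        refine ⟨hjK, fun l m h1 hlm hm => ?_⟩
        rw [hT l m h1 hlm ((hm.trans hj).trans hkκ) y]
        exact hj2 l m h1 hlm hm
  -- khat is always at least 1
  have hkhat1 : ∀ y : Fin n → ℝ, 1 ≤ khat n p K σv Ψ w z y := by
    intro y
    exact le_csSup ⟨K, fun x hx => hx.1⟩
      ⟨hK, fun l m h1 hlm hm => (by omega : False).elim⟩
  -- pointwise invariance of the integrand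
  have hpt : ∀ y : Fin n → ℝ,
      |quadForm (Bmat n p σv Ψ (w k))
          (thetaTilde n p σv Ψ (w k) (y + f) - thetaHatStep n p K σv Ψ w z k (y + f))| ^ r =
      |quadForm (Bmat n p σv Ψ (w k))
          (thetaTilde n p σv Ψ (w k) y - thetaHatStep n p K σv Ψ w z k y)| ^ r := by
    intro y
    have hm' : min k (khat n p K σv Ψ w z y) ≤ κ := (min_le_left _ _).trans hkκ
    have hm1 : 1 ≤ min k (khat n p K σv Ψ w z y) := le_min hk1 (hkhat1 y)
    unfold thetaHatStep
    rw [hmin y, htt k hk1 hkκ y, htt _ hm1 hm' y, add_sub_add_right_eq_sub]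
  -- the translation is measure preserving
  have hmp : MeasurePreserving (fun y => y + f) (gaussianVec n 0 s)
      (gaussianVec n f s) :=
    measurePreserving_pi _ _ (fun i =>
      ⟨measurable_add_const _, by rw [gaussianReal_map_add_const]; simp⟩)
  have hemb : MeasurableEmbedding (fun y : Fin n → ℝ => y + f) :=
    (MeasurableEquiv.addRight f).measurableEmbedding
  calc
    ∫ y, |quadForm (Bmat n p σv Ψ (w k))
        (thetaTilde n p σv Ψ (w k) y - thetaHatStep n p K σv Ψ w z k y)| ^ r
        ∂ gaussianVec n f s
      = ∫ y, |quadForm (Bmat n p σv Ψ (w k))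
          (thetaTilde n p σv Ψ (w k) (y + f) -
            thetaHatStep n p K σv Ψ w z k (y + f))| ^ r
          ∂ gaussianVec n 0 s := (hmp.integral_comp hemb _).symm
    _ = ∫ y, |quadForm (Bmat n p σv Ψ (w k))
          (thetaTilde n p σv Ψ (w k) y - thetaHatStep n p K σv Ψ w z k y)| ^ r
          ∂ gaussianVec n 0 s := by
        congr 1
        funext y
        exact hpt y

end SpatialAdapt
end
end

section
/- Lemma (componentwise propagation conditions). Assume (A6), (A7), and the propagation conditions (PC). Then for any θ ∈ ℝ^p, any j = 1, …, p, and all k = 2, …, K: (n h_k^d Λ0 / σ̄²_max(k))^{r} · E_{θ,Σ} |e_jᵀ θ̃_k − e_jᵀ θ̂_k|^{2r} ≤ E_{0,Σ} ‖ B_k^{1/2} (θ̃_k − θ̂_k) ‖^{2r} ≤ α C(p,r), where E_{θ,Σ} denotes expectation under Y ~ N(Ψᵀθ, Σ), E_{0,Σ} under Y ~ N(0, Σ), and C(p,r) = E|χ²_p|^r. -/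
open MeasureTheory ProbabilityTheory Matrix Real

noncomputable section

namespace SpatialAdapt

open scoped ComplexOrder in
/-- The square root of a positive semidefinite matrix (the Mathlib definition of December
2024, since removed from Mathlib). -/
def _root_.Matrix.PosSemidef.sqrt {𝕜 : Type*} [RCLike 𝕜] {ι : Type*} [Fintype ι] [DecidableEq ι]
    {A : Matrix ι ι 𝕜} (hA : A.PosSemidef) : Matrix ι ι 𝕜 :=
  hA.1.eigenvectorUnitary.1 * diagonal ((↑) ∘ Real.sqrt ∘ hA.1.eigenvalues) *
    (star hA.1.eigenvectorUnitary : Matrix ι ι 𝕜)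

/-! Each `θ̃_l` is linear in `Y` with `θ̃_l(Y + Ψᵀθ) = θ̃_l(Y) + θ`, so the tests `T_{lm}`, the
index `k̂` and the difference `θ̃_k - θ̂_k` are unchanged by this shift, and the risk under
`N(Ψᵀθ, Σ)` equals the risk under `N(0, Σ)`. Pointwise, with
`λ = n h_k^d Λ0 / σ̄²_max(k) ≤ n h_k^d Λ0 / σ²_max(k)`, (A7) gives
`λ u_j² ≤ λ ‖u‖² ≤ uᵀ B_k u = ‖B_k^{1/2} u‖²`. Integrating this needs the right-hand side to be
integrable, which holds because at each `Y` the difference `θ̃_k - θ̂_k` is one of finitely many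
linear images of the Gaussian vector `Y`. The second inequality is (PC). -/

open scoped ComplexOrder in
theorem _root_.Matrix.PosSemidef.sqrt_mul_self {𝕜 : Type*} [RCLike 𝕜] {ι : Type*} [Fintype ι]
    [DecidableEq ι] {A : Matrix ι ι 𝕜} (hA : A.PosSemidef) : hA.sqrt * hA.sqrt = A := by
  conv_rhs => rw [hA.1.spectral_theorem, Unitary.conjStarAlgAut_apply]
  have hU : (star hA.1.eigenvectorUnitary : Matrix ι ι 𝕜) * hA.1.eigenvectorUnitary.1 = 1 :=
    Unitary.coe_star_mul_self _
  unfold Matrix.PosSemidef.sqrt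
  simp only [Matrix.mul_assoc]
  rw [← Matrix.mul_assoc (star _ : Matrix ι ι 𝕜), hU, Matrix.one_mul,
    ← Matrix.mul_assoc (diagonal _), diagonal_mul_diagonal]
  congr 3
  funext i
  simp [← RCLike.ofReal_mul, Real.mul_self_sqrt (hA.eigenvalues_nonneg i)]

open scoped ComplexOrder in
theorem _root_.Matrix.PosSemidef.conjTranspose_sqrt {𝕜 : Type*} [RCLike 𝕜] {ι : Type*}
    [Fintype ι] [DecidableEq ι] {A : Matrix ι ι 𝕜} (hA : A.PosSemidef) : hA.sqrtᴴ = hA.sqrt := by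
  unfold Matrix.PosSemidef.sqrt
  rw [conjTranspose_mul, conjTranspose_mul, diagonal_conjTranspose, star_eq_conjTranspose,
    conjTranspose_conjTranspose, Matrix.mul_assoc]
  congr 3
  funext i
  simp

theorem enorm_sq {p : ℕ} (v : Fin p → ℝ) : enorm v ^ 2 = v ⬝ᵥ v := by
  rw [enorm, Real.sq_sqrt (Finset.sum_nonneg fun i _ => sq_nonneg _)]
  simp [dotProduct, sq]

theorem quadForm_eq_dotProduct_sqrt {p : ℕ} {B : Matrix (Fin p) (Fin p) ℝ} (hB : B.PosSemidef)
    (u : Fin p → ℝ) : quadForm B u = (hB.sqrt *ᵥ u) ⬝ᵥ (hB.sqrt *ᵥ u) := by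
  have hsymm : hB.sqrtᵀ = hB.sqrt := by
    rw [← conjTranspose_eq_transpose_of_trivial, hB.conjTranspose_sqrt]
  conv_lhs => rw [quadForm, ← hB.sqrt_mul_self, ← mulVec_mulVec, dotProduct_mulVec,
    ← mulVec_transpose, hsymm]

theorem enorm_sqrt_mulVec_rpow {p : ℕ} {B : Matrix (Fin p) (Fin p) ℝ} (hB : B.PosSemidef)
    (u : Fin p → ℝ) (r : ℝ) : enorm (hB.sqrt *ᵥ u) ^ (2 * r) = |quadForm B u| ^ r := by
  have hQ : quadForm B u = enorm (hB.sqrt *ᵥ u) ^ 2 := by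
    rw [enorm_sq, quadForm_eq_dotProduct_sqrt]
  rw [hQ, abs_of_nonneg (sq_nonneg _), Real.rpow_mul (x := enorm _) (Real.sqrt_nonneg _)]
  norm_cast

theorem LoewnerLE.mul_dotProduct_self_le {p : ℕ} {c : ℝ} {B : Matrix (Fin p) (Fin p) ℝ}
    (h : LoewnerLE (c • 1) B) (u : Fin p → ℝ) : c * (u ⬝ᵥ u) ≤ quadForm B u := by
  simpa [sub_mulVec, dotProduct_sub, smul_mulVec, sub_nonneg, quadForm] using
    h.dotProduct_mulVec_nonneg u

theorem rpow_mul_abs_rpow_le_abs_quadForm_rpow {p : ℕ} {c c' r : ℝ}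
    {B : Matrix (Fin p) (Fin p) ℝ} (h : LoewnerLE (c • 1) B) (hc' : 0 ≤ c') (hc'c : c' ≤ c)
    (hr : 0 ≤ r) (u : Fin p → ℝ) (j : Fin p) :
    c' ^ r * |u j| ^ (2 * r) ≤ |quadForm B u| ^ r := by
  have huj : u j ^ 2 ≤ u ⬝ᵥ u :=
    (sq (u j)).trans_le (Finset.single_le_sum (f := fun i => u i * u i)
      (fun i _ => mul_self_nonneg _) (Finset.mem_univ j))
  have hbound : c' * u j ^ 2 ≤ quadForm B u :=
    calc c' * u j ^ 2 ≤ c * (u ⬝ᵥ u) := mul_le_mul hc'c huj (sq_nonneg _) (hc'.trans hc'c)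
      _ ≤ quadForm B u := h.mul_dotProduct_self_le u
  calc c' ^ r * |u j| ^ (2 * r) = (c' * u j ^ 2) ^ r := by
        rw [Real.rpow_mul (abs_nonneg _), Real.mul_rpow hc' (sq_nonneg _)]
        norm_cast
        rw [sq_abs]
    _ ≤ |quadForm B u| ^ r :=
        Real.rpow_le_rpow (by positivity) (hbound.trans (le_abs_self _)) hr

theorem le_sbarMax (σmax : ℕ → ℝ) {k : ℕ} (hk : 1 ≤ k) : σmax k ≤ sbarMax σmax k :=
  le_csSup ((Set.finite_Icc 1 k).image σmax).bddAbove ⟨k, ⟨hk, le_rfl⟩, rfl⟩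

theorem continuous_quadForm {p : ℕ} (B : Matrix (Fin p) (Fin p) ℝ) :
    Continuous (quadForm B) := by
  unfold quadForm; fun_prop

theorem abs_quadForm_le {p : ℕ} (B : Matrix (Fin p) (Fin p) ℝ) (v : Fin p → ℝ) :
    |quadForm B v| ≤ (∑ a, ∑ b, |B a b|) * ‖v‖ ^ 2 := by
  have hv : ∀ a, |v a| ≤ ‖v‖ := fun a => by simpa using norm_le_pi_norm v a
  calc |quadForm B v| = |∑ a, ∑ b, v a * B a b * v b| := by
        simp [quadForm, dotProduct, mulVec, Finset.mul_sum, mul_assoc]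
    _ ≤ ∑ a, ∑ b, |v a * B a b * v b| :=
        (Finset.abs_sum_le_sum_abs _ _).trans
          (Finset.sum_le_sum fun a _ => Finset.abs_sum_le_sum_abs _ _)
    _ ≤ ∑ a, ∑ b, |B a b| * ‖v‖ ^ 2 := by
        gcongr with a _ b _
        rw [abs_mul, abs_mul, sq]
        nlinarith [mul_le_mul (hv a) (hv b) (abs_nonneg _) (norm_nonneg _), abs_nonneg (B a b)]
    _ = (∑ a, ∑ b, |B a b|) * ‖v‖ ^ 2 := by simp [Finset.sum_mul]

theorem memLp_of_forall_exists_mulVec {n p : ℕ} {μ : Measure (Fin n → ℝ)} {q : ENNReal}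
    {ι : Type*} {s : Finset ι} {A : ι → Matrix (Fin p) (Fin n) ℝ} {V : (Fin n → ℝ) → Fin p → ℝ}
    (hid : MemLp id q μ) (hV : AEStronglyMeasurable V μ) (hVA : ∀ y, ∃ i ∈ s, V y = A i *ᵥ y) :
    MemLp V q μ := by
  have hA : ∀ i, MemLp (fun y => A i *ᵥ y) q μ := fun i =>
    (LinearMap.toContinuousLinearMap (A i).mulVecLin).comp_memLp' hid
  refine MemLp.of_le (g := fun y => ∑ i ∈ s, ‖A i *ᵥ y‖)
    (memLp_finsetSum s fun i _ => (hA i).norm) hV (ae_of_all _ fun y => ?_)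
  obtain ⟨i, hi, hVy⟩ := hVA y
  rw [Real.norm_of_nonneg (Finset.sum_nonneg fun _ _ => norm_nonneg _), hVy]
  exact Finset.single_le_sum (f := fun i => ‖A i *ᵥ y‖) (fun _ _ => norm_nonneg _) hi

theorem integrable_abs_quadForm_rpow {α : Type*} [MeasurableSpace α] {μ : Measure α} {p : ℕ}
    (B : Matrix (Fin p) (Fin p) ℝ) {V : α → Fin p → ℝ} {r : ℝ} (hr : 0 < r)
    (hV : MemLp V (ENNReal.ofReal (2 * r)) μ) :
    Integrable (fun y => |quadForm B (V y)| ^ r) μ := by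
  set C := ∑ a, ∑ b, |B a b|
  have hint : Integrable (fun y => ‖V y‖ ^ (2 * r)) μ := by
    have h := hV.integrable_norm_rpow (ENNReal.ofReal_pos.mpr (by positivity)).ne'
      ENNReal.ofReal_ne_top
    rwa [ENNReal.toReal_ofReal (by positivity)] at h
  refine (hint.const_mul (C ^ r)).mono' ?_ (ae_of_all _ fun y => ?_)
  · exact (Real.continuous_rpow_const hr.le).comp_aestronglyMeasurable
      ((continuous_quadForm B).comp_aestronglyMeasurable hV.1).norm
  · have hC : 0 ≤ C := by positivity
    rw [Real.norm_of_nonneg (by positivity), Real.rpow_mul (norm_nonneg _),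
      ← Real.mul_rpow hC (by positivity)]
    exact Real.rpow_le_rpow (abs_nonneg _) (by exact_mod_cast abs_quadForm_le B (V y)) hr.le

theorem gaussianVec_map_add (n : ℕ) (m s c : Fin n → ℝ) :
    (gaussianVec n m s).map (· + c) = gaussianVec n (m + c) s := by
  have h := Measure.pi_map_pi (μ := fun i => gaussianReal (m i) (s i ^ 2).toNNReal)
    (f := fun i x => x + c i) fun i => (measurable_add_const (c i)).aemeasurable
  simp only [gaussianReal_map_add_const] at h
  exact h

theorem integral_gaussianVec_eq_of_add_invariant {E : Type*} [NormedAddCommGroup E]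
    [NormedSpace ℝ E] {n : ℕ} (s c : Fin n → ℝ) {F : (Fin n → ℝ) → E}
    (hF : ∀ y, F (y + c) = F y) :
    ∫ y, F y ∂gaussianVec n c s = ∫ y, F y ∂gaussianVec n 0 s := by
  rw [← zero_add c, ← gaussianVec_map_add,
    (MeasurableEquiv.addRight c).measurableEmbedding.integral_map (f := (· + c))]
  simp_rw [hF]

theorem memLp_id_gaussianVec (n : ℕ) (m s : Fin n → ℝ) {q : ENNReal} (hq : q ≠ ⊤) :
    MemLp id q (gaussianVec n m s) :=
  memLp_pi_iff.mpr fun i =>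
    (memLp_id_gaussianReal' q hq).comp_measurePreserving (measurePreserving_eval _ i)

section Equivariance

variable {n p K : ℕ} {σv : Fin n → ℝ} {Ψ : Matrix (Fin p) (Fin n) ℝ}

theorem Dmat_mul_transpose {w : Fin n → ℝ} (hB : IsUnit (Bmat n p σv Ψ w)) :
    Dmat n p σv Ψ w * Ψᵀ = 1 := by
  rw [Dmat, Matrix.mul_assoc, Matrix.mul_assoc, ← Matrix.mul_assoc Ψ]
  exact nonsing_inv_mul _ ((isUnit_iff_isUnit_det _).mp hB)

theorem thetaTilde_add_transpose_mulVec {w : Fin n → ℝ} (hB : IsUnit (Bmat n p σv Ψ w))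
    (θ : Fin p → ℝ) (y : Fin n → ℝ) :
    thetaTilde n p σv Ψ w (y + Ψᵀ *ᵥ θ) = thetaTilde n p σv Ψ w y + θ := by
  rw [thetaTilde, thetaTilde, mulVec_add, mulVec_mulVec, Dmat_mul_transpose hB, one_mulVec]

variable {w : ℕ → Fin n → ℝ}

theorem Tstat_add_transpose_mulVec (hB : ∀ l, 1 ≤ l → l ≤ K → IsUnit (Bmat n p σv Ψ (w l)))
    {l m : ℕ} (hl : 1 ≤ l) (hlm : l < m) (hmK : m ≤ K) (θ : Fin p → ℝ) (y : Fin n → ℝ) :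
    Tstat n p σv Ψ w l m (y + Ψᵀ *ᵥ θ) = Tstat n p σv Ψ w l m y := by
  rw [Tstat, Tstat, thetaTilde_add_transpose_mulVec (hB l hl (by omega)),
    thetaTilde_add_transpose_mulVec (hB m (by omega) hmK), add_sub_add_right_eq_sub]

theorem khat_add_transpose_mulVec (hB : ∀ l, 1 ≤ l → l ≤ K → IsUnit (Bmat n p σv Ψ (w l)))
    (z : ℕ → ℝ) (θ : Fin p → ℝ) (y : Fin n → ℝ) :
    khat n p K σv Ψ w z (y + Ψᵀ *ᵥ θ) = khat n p K σv Ψ w z y := by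
  unfold khat
  congr 1
  ext k
  refine and_congr_right fun hkK => forall₂_congr fun l m => ?_
  refine imp_congr_right fun hl => imp_congr_right fun hlm => imp_congr_right fun hmk => ?_
  rw [Tstat_add_transpose_mulVec hB hl hlm (hmk.trans hkK)]

theorem one_le_khat (hK : 1 ≤ K) (z : ℕ → ℝ) (y : Fin n → ℝ) :
    1 ≤ khat n p K σv Ψ w z y :=
  le_csSup ⟨K, fun _ hk => hk.1⟩ ⟨hK, fun _ _ _ _ _ => by omega⟩

theorem thetaHatStep_add_transpose_mulVec
    (hB : ∀ l, 1 ≤ l → l ≤ K → IsUnit (Bmat n p σv Ψ (w l))) (z : ℕ → ℝ) {k : ℕ} (hk : 1 ≤ k)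
    (hkK : k ≤ K) (θ : Fin p → ℝ) (y : Fin n → ℝ) :
    thetaHatStep n p K σv Ψ w z k (y + Ψᵀ *ᵥ θ) = thetaHatStep n p K σv Ψ w z k y + θ := by
  rw [thetaHatStep, thetaHatStep, khat_add_transpose_mulVec hB,
    thetaTilde_add_transpose_mulVec (hB _ (le_min hk (one_le_khat (hk.trans hkK) z y))
      ((min_le_left _ _).trans hkK))]

theorem thetaTilde_sub_thetaHatStep_add_transpose_mulVec
    (hB : ∀ l, 1 ≤ l → l ≤ K → IsUnit (Bmat n p σv Ψ (w l))) (z : ℕ → ℝ) {k : ℕ} (hk : 1 ≤ k)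
    (hkK : k ≤ K) (θ : Fin p → ℝ) (y : Fin n → ℝ) :
    thetaTilde n p σv Ψ (w k) (y + Ψᵀ *ᵥ θ) - thetaHatStep n p K σv Ψ w z k (y + Ψᵀ *ᵥ θ) =
      thetaTilde n p σv Ψ (w k) y - thetaHatStep n p K σv Ψ w z k y := by
  rw [thetaTilde_add_transpose_mulVec (hB k hk hkK),
    thetaHatStep_add_transpose_mulVec hB z hk hkK, add_sub_add_right_eq_sub]

end Equivariance

theorem measurable_sSup_setOf_le_and {Ω : Type*} [MeasurableSpace Ω] {P : ℕ → Ω → Prop}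
    (hP : ∀ k, Measurable (P k)) (K : ℕ) : Measurable fun ω => sSup {k | k ≤ K ∧ P k ω} := by
  refine measurable_of_Iic fun m => ?_
  have h : (fun ω => sSup {k | k ≤ K ∧ P k ω}) ⁻¹' Set.Iic m =
      {ω | ∀ k, k ≤ K → P k ω → k ≤ m} := by
    ext ω
    simp [csSup_le_iff' (⟨K, fun k hk => hk.1⟩ : BddAbove {k | k ≤ K ∧ P k ω})]
  rw [h]
  exact (Measurable.forall fun k => measurable_const.imp ((hP k).imp measurable_const)).setOf

section Measurability

variable {n p K : ℕ} {σv : Fin n → ℝ} {Ψ : Matrix (Fin p) (Fin n) ℝ} {w : ℕ → Fin n → ℝ}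

theorem continuous_thetaTilde (w : Fin n → ℝ) : Continuous (thetaTilde n p σv Ψ w) := by
  unfold thetaTilde; fun_prop

theorem measurable_khat (z : ℕ → ℝ) : Measurable (khat n p K σv Ψ w z) := by
  refine measurable_sSup_setOf_le_and (fun k => ?_) K
  refine Measurable.forall fun l => Measurable.forall fun m => ?_
  refine measurable_const.imp (measurable_const.imp (measurable_const.imp ?_))
  have hT : Continuous (Tstat n p σv Ψ w l m) :=
    (continuous_quadForm _).comp ((continuous_thetaTilde _).sub (continuous_thetaTilde _))
  exact measurableSet_setOfPred.mp (measurableSet_le hT.measurable measurable_const)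

theorem measurable_thetaHatStep (z : ℕ → ℝ) (k : ℕ) :
    Measurable (thetaHatStep n p K σv Ψ w z k) := by
  have h : Measurable fun q : (Fin n → ℝ) × ℕ => thetaTilde n p σv Ψ (w (min k q.2)) q.1 :=
    measurable_from_prod_countable_left fun m =>
      (continuous_thetaTilde (σv := σv) (Ψ := Ψ) (w (min k m))).measurable
  exact h.comp (f := fun y => (y, khat n p K σv Ψ w z y))
    (measurable_id.prodMk (measurable_khat z))

theorem integrable_abs_quadForm_thetaTilde_sub_thetaHatStep_rpow
    (B : Matrix (Fin p) (Fin p) ℝ) (z : ℕ → ℝ) (k : ℕ) {r : ℝ} (hr : 0 < r) (m s : Fin n → ℝ) :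
    Integrable (fun y => |quadForm B
      (thetaTilde n p σv Ψ (w k) y - thetaHatStep n p K σv Ψ w z k y)| ^ r)
      (gaussianVec n m s) := by
  refine integrable_abs_quadForm_rpow B hr (memLp_of_forall_exists_mulVec
    (memLp_id_gaussianVec n m s ENNReal.ofReal_ne_top)
    ((continuous_thetaTilde _).measurable.sub (measurable_thetaHatStep z k)).aestronglyMeasurable
    (s := Finset.range (k + 1)) (A := fun l => Dmat n p σv Ψ (w k) - Dmat n p σv Ψ (w l))
    fun y => ⟨min k (khat n p K σv Ψ w z y), ?_, ?_⟩)
  · exact Finset.mem_range.mpr (Nat.lt_succ_of_le (min_le_left _ _))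
  · simp [thetaHatStep, thetaTilde, sub_mulVec]

end Measurability

theorem componentwise_propagation_conditions_general
    (n p K : ℕ)
    (σv : Fin n → ℝ)
    (Ψ : Matrix (Fin p) (Fin n) ℝ)
    (w : ℕ → Fin n → ℝ)
    (hB : ∀ k, 1 ≤ k → k ≤ K → (Bmat n p σv Ψ (w k)).PosDef)
    (σmin σmax : ℕ → ℝ)
    (hA6 : ∀ k, 1 ≤ k → k ≤ K → 0 < σmin k ∧ σmin k ≤ σmax k ∧
      ∀ i, 0 < w k i → σmin k ≤ σv i ^ 2 ∧ σv i ^ 2 ≤ σmax k)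
    (d : ℕ) (h : ℕ → ℝ) (hh : ∀ k, 1 ≤ k → k ≤ K → 0 < h k)
    (Λ0 : ℝ) (hΛ0 : 0 < Λ0)
    (hA7 : ∀ k, 1 ≤ k → k ≤ K →
      LoewnerLE (((n : ℝ) * h k ^ d * Λ0 / σmax k) • (1 : Matrix (Fin p) (Fin p) ℝ))
        (Bmat n p σv Ψ (w k)))
    (r α : ℝ) (hr : 0 < r)
    (z : ℕ → ℝ)
    (hPC : ∀ k, 2 ≤ k → k ≤ K →
      ∫ y, |quadForm (Bmat n p σv Ψ (w k))
          (thetaTilde n p σv Ψ (w k) y - thetaHatStep n p K σv Ψ w z k y)| ^ r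
        ∂ gaussianVec n 0 σv ≤ α * Cpr p r)
    (θ : Fin p → ℝ) (j : Fin p) :
    ∀ (k : ℕ) (hk2 : 2 ≤ k) (hkK : k ≤ K),
      (((n : ℝ) * h k ^ d * Λ0 / sbarMax σmax k) ^ r *
        ∫ y, |thetaTilde n p σv Ψ (w k) y j - thetaHatStep n p K σv Ψ w z k y j| ^ (2 * r)
          ∂ gaussianVec n (Ψᵀ.mulVec θ) σv ≤
      ∫ y, enorm (((hB k (one_le_two.trans hk2) hkK).posSemidef.sqrt).mulVec
          (thetaTilde n p σv Ψ (w k) y - thetaHatStep n p K σv Ψ w z k y)) ^ (2 * r)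
        ∂ gaussianVec n 0 σv) ∧
      (∫ y, enorm (((hB k (one_le_two.trans hk2) hkK).posSemidef.sqrt).mulVec
          (thetaTilde n p σv Ψ (w k) y - thetaHatStep n p K σv Ψ w z k y)) ^ (2 * r)
        ∂ gaussianVec n 0 σv ≤ α * Cpr p r) := by
  intro k hk2 hkK
  have hk1 : 1 ≤ k := one_le_two.trans hk2
  simp_rw [enorm_sqrt_mulVec_rpow]
  refine ⟨?_, hPC k hk2 hkK⟩
  have hshift := thetaTilde_sub_thetaHatStep_add_transpose_mulVec
    (fun l hl hlK => (hB l hl hlK).isUnit) z hk1 hkK θ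
  obtain ⟨hσmin, hσminmax, -⟩ := hA6 k hk1 hkK
  have hσmax : 0 < σmax k := hσmin.trans_le hσminmax
  have hnum : 0 ≤ (n : ℝ) * h k ^ d * Λ0 := by
    have := hh k hk1 hkK
    positivity
  have hcoef : 0 ≤ (n : ℝ) * h k ^ d * Λ0 / sbarMax σmax k :=
    div_nonneg hnum (hσmax.le.trans (le_sbarMax σmax hk1))
  rw [integral_gaussianVec_eq_of_add_invariant σv _ fun y => by
    simpa using congrArg (fun v => |v j| ^ (2 * r)) (hshift y), ← integral_const_mul]
  refine integral_mono_of_nonneg (ae_of_all _ fun y => by positivity)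
    (integrable_abs_quadForm_thetaTilde_sub_thetaHatStep_rpow _ z k hr 0 σv)
    (ae_of_all _ fun y => ?_)
  exact rpow_mul_abs_rpow_le_abs_quadForm_rpow (hA7 k hk1 hkK) hcoef
    (div_le_div_of_nonneg_left hnum hσmax (le_sbarMax σmax hk1)) hr.le
    (thetaTilde n p σv Ψ (w k) y - thetaHatStep n p K σv Ψ w z k y) j

/-- **Componentwise propagation conditions.** Under (A6), (A7) and (PC), for any `θ`, any
coordinate `j` and all `k = 2, …, K`, the componentwise risk under `N(Ψᵀθ, Σ)` is bounded
by the risk of `‖B_k^{1/2}(θ̃_k - θ̂_k)‖` under `N(0, Σ)`, which is at most `α C(p,r)`. -/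
theorem componentwise_propagation_conditions
    (n p K : ℕ) (hpn : p < n) (hK : 1 ≤ K)
    (σv : Fin n → ℝ) (hσ : ∀ i, 0 < σv i)
    (Ψ : Matrix (Fin p) (Fin n) ℝ) (hA1 : Ψ.rank = p)
    (w : ℕ → Fin n → ℝ)
    (hw : ∀ k, 1 ≤ k → k ≤ K → ∀ i, w k i ∈ Set.Icc (0 : ℝ) 1)
    (hA3 : ∀ k, 2 ≤ k → k ≤ K → ∀ i, w (k - 1) i ≤ w k i)
    (hB : ∀ k, 1 ≤ k → k ≤ K → (Bmat n p σv Ψ (w k)).PosDef)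
    (σmin σmax : ℕ → ℝ)
    (hA6 : ∀ k, 1 ≤ k → k ≤ K → 0 < σmin k ∧ σmin k ≤ σmax k ∧
      ∀ i, 0 < w k i → σmin k ≤ σv i ^ 2 ∧ σv i ^ 2 ≤ σmax k)
    (d : ℕ) (h : ℕ → ℝ) (hh : ∀ k, 1 ≤ k → k ≤ K → 0 < h k)
    (Λ0 : ℝ) (hΛ0 : 0 < Λ0)
    (hA7 : ∀ k, 1 ≤ k → k ≤ K →
      LoewnerLE (((n : ℝ) * h k ^ d * Λ0 / σmax k) • (1 : Matrix (Fin p) (Fin p) ℝ))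
        (Bmat n p σv Ψ (w k)))
    (r α : ℝ) (hr : 0 < r) (hα0 : 0 < α) (hα1 : α ≤ 1)
    (z : ℕ → ℝ)
    (hPC : ∀ k, 2 ≤ k → k ≤ K →
      ∫ y, |quadForm (Bmat n p σv Ψ (w k))
          (thetaTilde n p σv Ψ (w k) y - thetaHatStep n p K σv Ψ w z k y)| ^ r
        ∂ gaussianVec n 0 σv ≤ α * Cpr p r)
    (θ : Fin p → ℝ) (j : Fin p) :
    ∀ (k : ℕ) (hk2 : 2 ≤ k) (hkK : k ≤ K),
      (((n : ℝ) * h k ^ d * Λ0 / sbarMax σmax k) ^ r *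
        ∫ y, |thetaTilde n p σv Ψ (w k) y j - thetaHatStep n p K σv Ψ w z k y j| ^ (2 * r)
          ∂ gaussianVec n (Ψᵀ.mulVec θ) σv ≤
      ∫ y, enorm (((hB k (one_le_two.trans hk2) hkK).posSemidef.sqrt).mulVec
          (thetaTilde n p σv Ψ (w k) y - thetaHatStep n p K σv Ψ w z k y)) ^ (2 * r)
        ∂ gaussianVec n 0 σv) ∧
      (∫ y, enorm (((hB k (one_le_two.trans hk2) hkK).posSemidef.sqrt).mulVec
          (thetaTilde n p σv Ψ (w k) y - thetaHatStep n p K σv Ψ w z k y)) ^ (2 * r)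
        ∂ gaussianVec n 0 σv ≤ α * Cpr p r) :=
  componentwise_propagation_conditions_general n p K σv Ψ w hB σmin σmax hA6 d h hh Λ0 hΛ0 hA7 r α
    hr z hPC θ j

end SpatialAdapt
end
end
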